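/- Let paral denote the quiver with two vertices s and t and exactly two arrows, both from s to t, and let T₁ := Cat.free ⋙ Quiv.forget be the free-category monad endofunctor on Quiv. Then the functor Quiv ⥤ Type sending a quiver X to the set of quiver morphisms (prefunctors) paral ⟶ T₁.obj X (the set of parallel pairs of paths in X) is a parametric right adjoint. -/

import Mathlib

open CategoryTheory CategoryTheory.Limits

universe u

/-- The carrier of the terminal quiver: one vertex and one arrow. -/
def TerminalQuiverCarrier : Type u := PUnit

instance : Quiver.{u} TerminalQuiverCarrier.{u} := ⟨fun _ _ => PUnit⟩

/-- The terminal object of `Quiv`: one vertex and one arrow. -/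
def terminalQuiv : Quiv.{u, u} := Quiv.of TerminalQuiverCarrier.{u}

instance (X : Quiv.{u, u}) : Subsingleton (X ⟶ terminalQuiv.{u}) := by
  constructor
  intro F G
  fapply Prefunctor.ext
  · intro x
    exact Subsingleton.elim (α := PUnit) _ _
  · intro x y f
    exact Subsingleton.elim (α := PUnit) _ _

instance (X : Quiv.{u, u}) : Nonempty (X ⟶ terminalQuiv.{u}) :=
  ⟨{ obj := fun _ => PUnit.unit, map := fun _ => PUnit.unit }⟩

/-- `Quiv` has a terminal object. -/
instance : HasTerminal Quiv.{u, u} := hasTerminal_of_unique terminalQuiv.{u}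

/-- The canonical comparison functor `A ⥤ Over (G.obj ⊤_A)` of a functor `G : A ⥤ B`,
sending `X` to `G.map (terminal.from X)`. -/
noncomputable def CategoryTheory.Functor.praComparison {A : Type*} [Category A] {B : Type*}
    [Category B] [HasTerminal A] (G : A ⥤ B) : A ⥤ Over (G.obj (⊤_ A)) where
  obj X := Over.mk (G.map (terminal.from X))
  map {X Y} f := Over.homMk (G.map f) (by simp [← Functor.map_comp])

/-- A functor `G : A ⥤ B` (with `A` having a terminal object) is a *parametric right adjoint*
if the induced functor `A ⥤ Over (G.obj ⊤_A)` has a left adjoint. -/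
def CategoryTheory.Functor.IsParametricRightAdjoint {A : Type*} [Category A] {B : Type*}
    [Category B] [HasTerminal A] (G : A ⥤ B) : Prop :=
  G.praComparison.IsRightAdjoint

/-- The vertices `s` and `t` of the quiver `paral`. -/
inductive ParalVertex : Type u | s | t

/-- The arrows of the quiver `paral`: exactly two arrows, both from `s` to `t`. -/
inductive ParalArrow : ParalVertex.{u} → ParalVertex.{u} → Type u
  | a : ParalArrow .s .t
  | b : ParalArrow .s .t

instance : Quiver.{u} ParalVertex.{u} := ⟨ParalArrow⟩

/-- The quiver with two vertices `s`, `t` and exactly two arrows, both from `s` to `t`. -/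
def paral : Quiv.{u, u} := Quiv.of ParalVertex.{u}

/-- The functor sending a quiver `X` to the set of quiver morphisms
`paral ⟶ T₁.obj X`, where `T₁ := Cat.free ⋙ Quiv.forget` is the free-category monad
endofunctor; i.e. the set of parallel pairs of paths in `X`. -/
def parallelPairsOfPaths : Quiv.{u, u} ⥤ Type u :=
  (Cat.free ⋙ Quiv.forget) ⋙ coyoneda.obj (Opposite.op paral.{u})

/-! A pair of parallel paths of lengths `m` and `n` in `X` is the same as a prefunctor into `X`
from the quiver `WalkingParallelPaths m n` made of two such paths glued at their endpoints, and an
element of `parallelPairsOfPaths.obj (⊤_ Quiv)` is nothing but such a pair of lengths. Hence every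
fibre of `parallelPairsOfPaths X → parallelPairsOfPaths (⊤_ Quiv)` is corepresented by a generic
element, and the left adjoint of the comparison functor sends
`f : S → parallelPairsOfPaths (⊤_ Quiv)` to the disjoint union of the quivers
`WalkingParallelPaths` indexed by `S`. -/

universe w

namespace Prefunctor

variable {V W : Type*} [Quiver V] [Quiver W]

lemma hext {F G : V ⥤q W} (h_obj : ∀ X, F.obj X = G.obj X)
    (h_map : ∀ (X Y : V) (f : X ⟶ Y), HEq (F.map f) (G.map f)) : F = G := by
  obtain ⟨Fobj, Fmap⟩ := F
  obtain ⟨Gobj, Gmap⟩ := G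
  obtain rfl : Fobj = Gobj := funext h_obj
  obtain rfl : @Fmap = @Gmap := by
    funext X Y f
    exact eq_of_heq (h_map X Y f)
  rfl

lemma map_heq_of_eq {F G : V ⥤q W} (h : F = G) {X Y : V} (f : X ⟶ Y) :
    HEq (F.map f) (G.map f) := by
  subst h
  rfl

@[simp]
lemma length_mapPath (F : V ⥤q W) {a b : V} (p : Quiver.Path a b) :
    (F.mapPath p).length = p.length := by
  induction p with
  | nil => rfl
  | cons p e ih => exact congrArg (· + 1) ih

lemma mapPath_cast_heq (F : V ⥤q W) {a b a' b' : V} (ha : a = a') (hb : b = b')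
    (p : Quiver.Path a b) : HEq (F.mapPath (p.cast ha hb)) (F.mapPath p) := by
  subst ha hb
  rfl

end Prefunctor

namespace Quiver.Path

variable {V : Type*} [Quiver V]

lemma length_cast {a b a' b' : V} (ha : a = a') (hb : b = b') (p : Path a b) :
    (p.cast ha hb).length = p.length := by
  subst ha hb
  rfl

lemma cons_heq_cons_iff {a a' b b' c c' : V} (ha : a = a') (hc : c = c') {p : Path a b}
    {p' : Path a' b'} {e : b ⟶ c} {e' : b' ⟶ c'} :
    HEq (p.cons e) (p'.cons e') ↔ b = b' ∧ HEq p p' ∧ HEq e e' := by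
  subst ha hc
  refine ⟨fun h => ?_, ?_⟩
  · have h := eq_of_heq h
    exact ⟨obj_eq_of_cons_eq_cons h, heq_of_cons_eq_cons h, hom_heq_of_cons_eq_cons h⟩
  · rintro ⟨rfl, hp, he⟩
    rw [eq_of_heq hp, eq_of_heq he]

lemma heq_of_length_eq [Subsingleton V] [∀ a b : V, Subsingleton (a ⟶ b)] {a b : V}
    (p : Path a b) {a' b' : V} (q : Path a' b') (h : p.length = q.length) : HEq p q := by
  induction p generalizing b' with
  | nil =>
    cases q with
    | nil => obtain rfl : a = a' := Subsingleton.elim _ _; rfl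
    | cons => simp at h
  | @cons b c p e ih =>
    cases q with
    | nil => simp at h
    | @cons b'' _ q e' =>
      have hb : b = b'' := Subsingleton.elim _ _
      have hc : c = b' := Subsingleton.elim _ _
      exact (cons_heq_cons_iff (Subsingleton.elim _ _) hc).mpr ⟨hb, ih q (Nat.succ_injective h),
        (Hom.cast_heq hb hc e).symm.trans (heq_of_eq (Subsingleton.elim _ e'))⟩

end Quiver.Path

namespace CategoryTheory.Functor

variable {A : Type*} [Category A] [HasTerminal A]

def IsGenericElement (G : A ⥤ Type w) {E : A} (e : G.obj E) : Prop :=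
  ∀ (X : A) (x : G.obj X), G.map (terminal.from X) x = G.map (terminal.from E) e →
    ∃! φ : E ⟶ X, G.map φ e = x

lemma map_terminal_from_map (G : A ⥤ Type w) {E X : A} (φ : E ⟶ X) (x : G.obj E) :
    G.map (terminal.from X) (G.map φ x) = G.map (terminal.from E) x := by
  rw [← Functor.map_comp_apply, terminal.comp_from]

theorem isParametricRightAdjoint_of_isGenericElement [HasCoproducts.{w} A] (G : A ⥤ Type w)
    (h : ∀ i : G.obj (⊤_ A), ∃ (E : A) (e : G.obj E),
      G.map (terminal.from E) e = i ∧ G.IsGenericElement e) :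
    G.IsParametricRightAdjoint := by
  choose E e he hgen using h
  refine isRightAdjoint_of_leftAdjointObjIsDefined_eq_top (funext fun f => eq_true ?_)
  let toOver (X : A) (φ : ∐ (fun s => E (f.hom s)) ⟶ X) : f ⟶ G.praComparison.obj X :=
    Over.homMk (TypeCat.ofHom fun s => G.map (Sigma.ι _ s ≫ φ) (e (f.hom s))) (by
      ext s
      exact (map_terminal_from_map G _ _).trans (he _))
  have bij (X : A) : Function.Bijective (toOver X) := by
    refine ⟨fun φ φ' hφ => Sigma.hom_ext _ _ fun s => ?_, fun ψ => ?_⟩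
    · exact (hgen _ X _ (map_terminal_from_map G _ _)).unique rfl
        (congrArg (fun ψ : f ⟶ _ => ψ.left s) hφ).symm
    · choose φ hφ using fun s => (hgen (f.hom s) X (ψ.left s)
        ((ConcreteCategory.congr_hom (Over.w ψ) s).trans (he _).symm)).exists
      refine ⟨Limits.Sigma.desc φ, Over.OverMorphism.ext ?_⟩
      ext s
      change G.map (Limits.Sigma.ι _ s ≫ Limits.Sigma.desc φ) _ = _
      rw [Limits.Sigma.ι_desc]
      exact hφ s
  exact ⟨_, ⟨{
    homEquiv := Equiv.ofBijective _ (bij _)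
    homEquiv_comp := fun g φ => by
      apply Over.OverMorphism.ext
      ext s
      exact (congrArg (fun ψ => G.map ψ (e (f.hom s))) (Category.assoc _ _ _).symm).trans
        (Functor.map_comp_apply _ _ _ _) }⟩⟩

end CategoryTheory.Functor

namespace Quiver

variable {J : Type*} (V : J → Type*) [∀ j, Quiver (V j)]

inductive SigmaHom : (Σ j, V j) → (Σ j, V j) → Type _
  | mk {j : J} {a b : V j} (f : a ⟶ b) : SigmaHom ⟨j, a⟩ ⟨j, b⟩

instance : Quiver (Σ j, V j) := ⟨SigmaHom V⟩

variable {V}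

def Sigma.incl (j : J) : V j ⥤q Σ j, V j where
  obj a := ⟨j, a⟩
  map f := SigmaHom.mk f

def Sigma.desc {W : Type*} [Quiver W] (F : ∀ j, V j ⥤q W) : (Σ j, V j) ⥤q W where
  obj a := (F a.1).obj a.2
  map := fun (SigmaHom.mk f) => (F _).map f

lemma Sigma.hom_ext {W : Type*} [Quiver W] {F G : (Σ j, V j) ⥤q W}
    (h : ∀ j, Sigma.incl j ⋙q F = Sigma.incl j ⋙q G) : F = G :=
  Prefunctor.hext (fun ⟨j, a⟩ => congrArg (·.obj a) (h j))
    (fun _ _ ⟨f⟩ => Prefunctor.map_heq_of_eq (h _) f)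

end Quiver

namespace Quiv

def sigmaCofan {J : Type u} (X : J → Quiv.{u, u}) : Cofan X :=
  Cofan.mk (Quiv.of (Σ j, X j)) fun j => (Quiver.Sigma.incl (V := fun j => X j) j : _)

def sigmaCofanIsColimit {J : Type u} (X : J → Quiv.{u, u}) : IsColimit (sigmaCofan X) :=
  Cofan.IsColimit.mk _ (fun t => (Quiver.Sigma.desc (V := fun j => X j) fun j => t.inj j : _))
    (fun _ _ => rfl) (fun _ _ hm => Quiver.Sigma.hom_ext fun j => hm j)

instance : HasCoproducts.{u} Quiv.{u, u} :=
  hasCoproducts_of_colimit_cofans _ sigmaCofanIsColimit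

end Quiv

namespace Quiver

/-- `WalkingPath (n + 1)` is `WalkingPath n` with a new last vertex `none` and one arrow into it,
so that prefunctors out of it are built exactly as paths are, by `Path.cons`. -/
def WalkingPath : ℕ → Type u
  | 0 => PUnit
  | n + 1 => Option (WalkingPath n)

namespace WalkingPath

def first : (n : ℕ) → WalkingPath.{u} n
  | 0 => PUnit.unit
  | n + 1 => some (first n)

def last : (n : ℕ) → WalkingPath.{u} n
  | 0 => PUnit.unit
  | _ + 1 => none

inductive Hom : (n : ℕ) → WalkingPath.{u} n → WalkingPath.{u} n → Type u
  | lift {n : ℕ} {a b : WalkingPath n} : Hom n a b → Hom (n + 1) (some a) (some b)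
  | snoc (n : ℕ) : Hom (n + 1) (some (last n)) none

instance (n : ℕ) : Quiver (WalkingPath.{u} n) := ⟨Hom n⟩

def incl (n : ℕ) : WalkingPath.{u} n ⥤q WalkingPath.{u} (n + 1) where
  obj := some
  map := Hom.lift

def path : (n : ℕ) → Path (first.{u} n) (last.{u} n)
  | 0 => .nil
  | n + 1 => ((incl n).mapPath (path n)).cons (Hom.snoc n)

lemma length_path : (n : ℕ) → (path.{u} n).length = n
  | 0 => rfl
  | n + 1 => congrArg (· + 1) ((Prefunctor.length_mapPath _ _).trans (length_path n))

variable {X : Type*} [Quiver X]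

def const (x : X) : WalkingPath.{u} 0 ⥤q X where
  obj _ := x
  map f := nomatch f

def snoc {n : ℕ} (F : WalkingPath.{u} n ⥤q X) {y : X} (e : F.obj (last n) ⟶ y) :
    WalkingPath.{u} (n + 1) ⥤q X where
  obj
    | some a => F.obj a
    | none => y
  map
    | .lift f => F.map f
    | .snoc _ => e

lemma mapPath_path_succ {n : ℕ} (F : WalkingPath.{u} (n + 1) ⥤q X) :
    F.mapPath (path (n + 1)) = ((incl n ⋙q F).mapPath (path n)).cons (F.map (Hom.snoc n)) :=
  congrArg (fun p : Path (F.obj (first (n + 1))) (F.obj (some (last n))) =>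
    p.cons (F.map (Hom.snoc n))) (Prefunctor.mapPath_comp_apply _ _ _).symm

lemma hom_ext : {n : ℕ} → {F G : WalkingPath.{u} n ⥤q X} →
    F.obj (first n) = G.obj (first n) → F.obj (last n) = G.obj (last n) →
    HEq (F.mapPath (path n)) (G.mapPath (path n)) → F = G
  | 0, _, _, _, h₁, _ => Prefunctor.hext (fun _ => h₁) (fun _ _ f => nomatch f)
  | n + 1, F, G, h₀, h₁, h => by
    rw [mapPath_path_succ, mapPath_path_succ] at h
    obtain ⟨hmid, hpath, hsnoc⟩ := (Path.cons_heq_cons_iff h₀ h₁).mp h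
    have hincl : incl n ⋙q F = incl n ⋙q G := hom_ext h₀ hmid hpath
    refine Prefunctor.hext (fun | some a => congrArg (·.obj a) hincl | none => h₁) ?_
    intro _ _ f
    match f with
    | .lift f => exact Prefunctor.map_heq_of_eq hincl f
    | .snoc _ => exact hsnoc

lemma exists_mapPath_path_heq {a b : X} (p : Path a b) {n : ℕ} (hp : p.length = n) :
    ∃ F : WalkingPath.{u} n ⥤q X,
      F.obj (first n) = a ∧ F.obj (last n) = b ∧ HEq (F.mapPath (path n)) p := by
  induction p generalizing n with
  | nil =>
    subst hp
    exact ⟨const a, rfl, rfl, HEq.rfl⟩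
  | cons p e ih =>
    obtain _ | n := n
    · simp at hp
    obtain ⟨F, h₀, h₁, hF⟩ := ih (Nat.succ_injective hp)
    refine ⟨snoc F (e.cast h₁.symm rfl), h₀, rfl, ?_⟩
    rw [mapPath_path_succ]
    exact (Path.cons_heq_cons_iff h₀ rfl).mpr ⟨h₁, hF, Hom.cast_heq h₁.symm rfl e⟩

end WalkingPath

open WalkingPath

inductive WalkingParallelPaths.Rel (m n : ℕ) :
    WalkingPath.{u} m ⊕ WalkingPath.{u} n → WalkingPath.{u} m ⊕ WalkingPath.{u} n → Prop
  | first : Rel m n (.inl (first m)) (.inr (first n))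
  | last : Rel m n (.inl (last m)) (.inr (last n))

def WalkingParallelPaths (m n : ℕ) : Type u :=
  Quot (WalkingParallelPaths.Rel.{u} m n)

namespace WalkingParallelPaths

variable {m n : ℕ}

inductive Hom : WalkingParallelPaths.{u} m n → WalkingParallelPaths.{u} m n → Type u
  | left {a b : WalkingPath m} : (a ⟶ b) → Hom (Quot.mk _ (.inl a)) (Quot.mk _ (.inl b))
  | right {a b : WalkingPath n} : (a ⟶ b) → Hom (Quot.mk _ (.inr a)) (Quot.mk _ (.inr b))

instance : Quiver (WalkingParallelPaths.{u} m n) := ⟨Hom⟩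

def inl : WalkingPath.{u} m ⥤q WalkingParallelPaths.{u} m n where
  obj a := Quot.mk _ (.inl a)
  map := Hom.left

def inr : WalkingPath.{u} n ⥤q WalkingParallelPaths.{u} m n where
  obj a := Quot.mk _ (.inr a)
  map := Hom.right

lemma inl_obj_first : (inl.obj (first m) : WalkingParallelPaths.{u} m n) = inr.obj (first n) :=
  Quot.sound .first

lemma inl_obj_last : (inl.obj (last m) : WalkingParallelPaths.{u} m n) = inr.obj (last n) :=
  Quot.sound .last

variable {X : Type*} [Quiver X]

def desc (F : WalkingPath.{u} m ⥤q X) (G : WalkingPath.{u} n ⥤q X)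
    (h₀ : F.obj (first m) = G.obj (first n)) (h₁ : F.obj (last m) = G.obj (last n)) :
    WalkingParallelPaths.{u} m n ⥤q X where
  obj := Quot.lift (Sum.elim F.obj G.obj) fun
    | _, _, .first => h₀
    | _, _, .last => h₁
  map
    | .left f => F.map f
    | .right f => G.map f

lemma hom_ext {H H' : WalkingParallelPaths.{u} m n ⥤q X} (hl : inl ⋙q H = inl ⋙q H')
    (hr : inr ⋙q H = inr ⋙q H') : H = H' := by
  refine Prefunctor.hext (Quot.ind fun
    | .inl a => congrArg (·.obj a) hl
    | .inr b => congrArg (·.obj b) hr) ?_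
  intro _ _ f
  match f with
  | .left f => exact Prefunctor.map_heq_of_eq hl f
  | .right f => exact Prefunctor.map_heq_of_eq hr f

end WalkingParallelPaths

end Quiver

open Quiver

namespace parallelPairsOfPaths

variable {X : Quiv.{u, u}}

def mk {x y : X} (p q : Path x y) : parallelPairsOfPaths.obj X where
  obj
    | .s => x
    | .t => y
  map
    | .a => p
    | .b => q

def lengths (x : parallelPairsOfPaths.obj X) : ℕ × ℕ :=
  ((x.map ParalArrow.a).length, (x.map ParalArrow.b).length)

@[simp]
lemma lengths_map {Y : Quiv.{u, u}} (φ : X ⟶ Y) (x : parallelPairsOfPaths.obj X) :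
    lengths (parallelPairsOfPaths.map φ x) = lengths x :=
  Prod.ext (Prefunctor.length_mapPath φ _) (Prefunctor.length_mapPath φ _)

lemma ext {x y : parallelPairsOfPaths.obj X} (hs : x.obj .s = y.obj .s) (ht : x.obj .t = y.obj .t)
    (ha : HEq (x.map ParalArrow.a) (y.map ParalArrow.a))
    (hb : HEq (x.map ParalArrow.b) (y.map ParalArrow.b)) : x = y :=
  Prefunctor.hext (fun | .s => hs | .t => ht) fun
    | _, _, .a => ha
    | _, _, .b => hb

lemma eq_of_lengths_eq [Subsingleton X] [∀ a b : X, Subsingleton (a ⟶ b)]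
    {x y : parallelPairsOfPaths.obj X} (h : lengths x = lengths y) : x = y :=
  ext (Subsingleton.elim (α := X) _ _) (Subsingleton.elim (α := X) _ _)
    (Path.heq_of_length_eq _ _ (congrArg Prod.fst h))
    (Path.heq_of_length_eq _ _ (congrArg Prod.snd h))

lemma eq_of_lengths_eq_of_terminal {x y : parallelPairsOfPaths.obj (⊤_ Quiv.{u, u})}
    (h : lengths x = lengths y) : x = y := by
  -- `⊤_ Quiv` is a retract of `terminalQuiv`, whose vertices and arrows form subsingletons.
  let r : ⊤_ Quiv.{u, u} ⟶ terminalQuiv.{u} := ⟨fun _ => ⟨⟩, fun _ => ⟨⟩⟩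
  have hr (z : parallelPairsOfPaths.obj (⊤_ Quiv.{u, u})) :
      parallelPairsOfPaths.map (terminal.from _) (parallelPairsOfPaths.map r z) = z := by
    rw [← Functor.map_comp_apply, terminal.hom_ext (r ≫ terminal.from _) (𝟙 _),
      Functor.map_id_apply]
  have : Subsingleton terminalQuiv.{u} := inferInstanceAs (Subsingleton PUnit)
  have (a b : terminalQuiv.{u}) : Subsingleton (a ⟶ b) := inferInstanceAs (Subsingleton PUnit)
  rw [← hr x, ← hr y, eq_of_lengths_eq (x := parallelPairsOfPaths.map r x)]
  simpa using h

end parallelPairsOfPaths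

namespace Quiver.WalkingParallelPaths

open WalkingPath parallelPairsOfPaths

variable {m n : ℕ}

def generic (m n : ℕ) : parallelPairsOfPaths.obj (Quiv.of (WalkingParallelPaths.{u} m n)) :=
  parallelPairsOfPaths.mk (inl.mapPath (path m))
    ((inr.mapPath (path n)).cast inl_obj_first.symm inl_obj_last.symm)

lemma lengths_generic : lengths (generic.{u} m n) = (m, n) :=
  Prod.ext ((Prefunctor.length_mapPath _ _).trans (length_path m))
    ((Path.length_cast _ _ _).trans ((Prefunctor.length_mapPath _ _).trans (length_path n)))

lemma eq_of_map_generic_eq {X : Quiv.{u, u}} {φ ψ : Quiv.of (WalkingParallelPaths.{u} m n) ⟶ X}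
    (h : parallelPairsOfPaths.map φ (generic m n) = parallelPairsOfPaths.map ψ (generic m n)) :
    φ = ψ := by
  have hs := congrArg (·.obj ParalVertex.s) h
  have ht := congrArg (·.obj ParalVertex.t) h
  have ha := Prefunctor.map_heq_of_eq h ParalArrow.a
  have hb := Prefunctor.map_heq_of_eq h ParalArrow.b
  refine hom_ext (WalkingPath.hom_ext hs ht ?_) (WalkingPath.hom_ext ?_ ?_ ?_)
  · exact (heq_of_eq (Prefunctor.mapPath_comp_apply _ _ _)).trans
      (ha.trans (heq_of_eq (Prefunctor.mapPath_comp_apply _ _ _).symm))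
  · exact (congrArg φ.obj inl_obj_first.symm).trans (hs.trans (congrArg ψ.obj inl_obj_first))
  · exact (congrArg φ.obj inl_obj_last.symm).trans (ht.trans (congrArg ψ.obj inl_obj_last))
  · exact (heq_of_eq (Prefunctor.mapPath_comp_apply _ _ _)).trans
      ((Prefunctor.mapPath_cast_heq _ _ _ _).symm.trans (hb.trans
        ((Prefunctor.mapPath_cast_heq _ _ _ _).trans
          (heq_of_eq (Prefunctor.mapPath_comp_apply _ _ _).symm))))

lemma exists_map_generic_eq {X : Quiv.{u, u}} (x : parallelPairsOfPaths.obj X)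
    (hx : lengths x = (m, n)) : ∃ φ : Quiv.of (WalkingParallelPaths.{u} m n) ⟶ X,
      parallelPairsOfPaths.map φ (generic m n) = x := by
  obtain ⟨F, hF₀, hF₁, hF⟩ :=
    exists_mapPath_path_heq (x.map ParalArrow.a) (congrArg Prod.fst hx)
  obtain ⟨G, hG₀, hG₁, hG⟩ :=
    exists_mapPath_path_heq (x.map ParalArrow.b) (congrArg Prod.snd hx)
  refine ⟨desc F G (hF₀.trans hG₀.symm) (hF₁.trans hG₁.symm), ext hF₀ hF₁ ?_ ?_⟩
  · exact (heq_of_eq (Prefunctor.mapPath_comp_apply _ _ _).symm).trans hF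
  · exact (Prefunctor.mapPath_cast_heq _ _ _ _).trans
      ((heq_of_eq (Prefunctor.mapPath_comp_apply _ _ _).symm).trans hG)

lemma isGenericElement_generic : parallelPairsOfPaths.IsGenericElement (generic.{u} m n) := by
  intro X x hx
  obtain ⟨φ, hφ⟩ :=
    exists_map_generic_eq x (by simpa [lengths_generic] using congrArg lengths hx)
  exact ⟨φ, hφ, fun ψ hψ => eq_of_map_generic_eq (hψ.trans hφ.symm)⟩

end Quiver.WalkingParallelPaths

/-- The functor sending a quiver to its set of parallel pairs of paths is a parametric right
adjoint. -/
theorem parallelPairsOfPaths_isParametricRightAdjoint :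
    parallelPairsOfPaths.{u}.IsParametricRightAdjoint := by
  refine parallelPairsOfPaths.isParametricRightAdjoint_of_isGenericElement fun i => ?_
  refine ⟨_, WalkingParallelPaths.generic (parallelPairsOfPaths.lengths i).1
    (parallelPairsOfPaths.lengths i).2, ?_, WalkingParallelPaths.isGenericElement_generic⟩
  apply parallelPairsOfPaths.eq_of_lengths_eq_of_terminal
  simp [WalkingParallelPaths.lengths_generic]
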